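/- Let Σ = {a < b < c}, let α ∈ {a, c}, and suppose w = xαbybα and w' = xbαyαb for some x, y ∈ Σ*. Let ᾱ be the letter of Σ other than α and b. Then the circular words [w] and [w'] are M-equivalent (i.e., Ψ_Σ([w]) = Ψ_Σ([w'])) if and only if |x|_ᾱ·(|y| + |y|_b + 3) = |y|_ᾱ·(|x| + |x|_b + 3). -/

import Mathlib

/-- The number of occurrences of `v` as a scattered subword (subsequence) of `w`:
the number of strictly increasing sequences of positions in `w` spelling out `v`. -/
def subwordCount {α : Type*} [DecidableEq α] (w v : List α) : ℕ :=
  w.sublists.count v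

/-- The conjugacy class (circular word) `[w]` of `w`: the set of all cyclic shifts of `w`. -/
def conjClass {α : Type*} [DecidableEq α] (w : List α) : Finset (List α) :=
  insert w ((Finset.range w.length).image w.rotate)

/-- The average subword count of `v` in the circular word `[w]`:
`|[w]|_v = (1/|[w]|) ∑_{u ∈ [w]} |u|_v`. -/
def circCount {α : Type*} [DecidableEq α] (w v : List α) : ℚ :=
  (∑ u ∈ conjClass w, (subwordCount u v : ℚ)) / ((conjClass w).card : ℚ)

/-- The Parikh matrix of the letter `q` of the ordered alphabet `Fin s`:
the identity matrix with an extra `1` in entry `(q, q+1)`. -/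
def parikhLetter {s : ℕ} (q : Fin s) : Matrix (Fin (s + 1)) (Fin (s + 1)) ℚ :=
  1 + Matrix.single q.castSucc q.succ 1

/-- The Parikh matrix mapping over the ordered alphabet `Fin s` (a monoid morphism). -/
def parikhMatrix {s : ℕ} (w : List (Fin s)) : Matrix (Fin (s + 1)) (Fin (s + 1)) ℚ :=
  (w.map parikhLetter).prod

/-- The Parikh matrix of the circular word `[w]`:
`Ψ([w]) = (1/|[w]|) ∑_{u ∈ [w]} Ψ(u)`. -/
def circParikh {s : ℕ} (w : List (Fin s)) : Matrix (Fin (s + 1)) (Fin (s + 1)) ℚ :=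
  (((conjClass w).card : ℚ))⁻¹ • ∑ u ∈ conjClass w, parikhMatrix u

/-- The alternate matrix: `(i,j)` entry is `(-1)^(i+j)` times the `(i,j)` entry of `A`. -/
def altMatrix {n : ℕ} (A : Matrix (Fin n) (Fin n) ℚ) : Matrix (Fin n) (Fin n) ℚ :=
  Matrix.of fun i j => (-1 : ℚ) ^ (i.val + j.val) * A i j

/-- The word `a_i a_{i+1} ⋯ a_j` over the ordered alphabet `Fin s`. -/
def segWord {s : ℕ} (i j : Fin s) : List (Fin s) :=
  (List.range (j.val - i.val + 1)).attach.map fun t =>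
    ⟨i.val + t.1, by
      have ht := List.mem_range.mp t.2
      have hi := i.isLt
      have hj := j.isLt
      omega⟩

/-!
`Ψ([w])` is the average of `Ψ` over all `|w|` rotations of `w`, and over `{a < b < c}` the
entries of `Ψ(u)` are `|u|_a, |u|_b, |u|_c, |u|_ab, |u|_bc, |u|_abc`. Align the rotations of
`w = xαbybα` and `w' = xbαyαb` by cut point. The letter counts agree, and so do the summed
counts of `ab` and `bc`. For `abc`, each of the `|x| + 1` cuts inside `x` raises the count of `w`
over that of `w'` by `|y|_ᾱ`, each of the `|y| + 1` cuts inside `y` lowers it by `|x|_ᾱ`, and the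
two remaining cuts contribute `|y|_ᾱ(|x|_b + 2) - |x|_ᾱ(|y|_b + 2)`. Hence the summed `abc`
counts of `[w]` and `[w']` differ by `|y|_ᾱ(|x| + |x|_b + 3) - |x|_ᾱ(|y| + |y|_b + 3)`.
-/

open Finset

section SubwordCounts

variable {β : Type*} [DecidableEq β]

/- `pairCount a b u = |u|_{ab}` and `tripleCount a b c u = |u|_{abc}` (scattered subwords). -/
@[simp] def pairCount (a b : β) : List β → ℕ
  | [] => 0
  | d :: u => (if d = a then u.count b else 0) + pairCount a b u

@[simp] def tripleCount (a b c : β) : List β → ℕ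
  | [] => 0
  | d :: u => (if d = a then pairCount b c u else 0) + tripleCount a b c u

@[simp] lemma pairCount_append (a b : β) (u v : List β) :
    pairCount a b (u ++ v) = pairCount a b u + pairCount a b v + u.count a * v.count b := by
  induction u with
  | nil => simp
  | cons d u ih =>
    by_cases h : d = a
    · simp [h, ih]; ring
    · simp [h, ih]

@[simp] lemma tripleCount_append (a b c : β) (u v : List β) :
    tripleCount a b c (u ++ v) = tripleCount a b c u + tripleCount a b c v +
      pairCount a b u * v.count c + u.count a * pairCount b c v := by
  induction u with
  | nil => simp
  | cons d u ih =>
    by_cases h : d = a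
    · simp [h, ih]; ring
    · simp [h, ih]

lemma pairCount_swap_blocks (a b d e : β) (P Q R : List β) :
    pairCount d e (P ++ [a, b] ++ Q ++ [b, a] ++ R) =
      pairCount d e (P ++ [b, a] ++ Q ++ [a, b] ++ R) := by
  simp only [List.cons_append, List.append_assoc, List.nil_append, pairCount_append, pairCount,
    List.count_append, List.count_cons, beq_iff_eq]
  split_ifs <;> ring

lemma pairCount_swap_ends (a b d e : β) (x y : List β) :
    pairCount d e (b :: y ++ [b, a] ++ x ++ [a]) + pairCount d e (a :: x ++ [a, b] ++ y ++ [b]) =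
      pairCount d e (a :: y ++ [a, b] ++ x ++ [b]) +
        pairCount d e (b :: x ++ [b, a] ++ y ++ [a]) := by
  simp only [List.cons_append, List.append_assoc, List.nil_append, pairCount_append, pairCount,
    List.count_append, List.count_cons, List.count_nil, beq_iff_eq]
  split_ifs <;> ring

section Distinct

variable {a b c : β} (hab : a ≠ b) (hac : a ≠ c) (hbc : b ≠ c)
include hab hac hbc

lemma tripleCount_swap_blocks_ab (P Q R : List β) :
    tripleCount a b c (P ++ [a, b] ++ Q ++ [b, a] ++ R) =
      tripleCount a b c (P ++ [b, a] ++ Q ++ [a, b] ++ R) + Q.count c := by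
  simp [hab, hac, hbc, hab.symm]; ring

lemma tripleCount_swap_blocks_cb (P Q R : List β) :
    tripleCount a b c (P ++ [c, b] ++ Q ++ [b, c] ++ R) =
      tripleCount a b c (P ++ [b, c] ++ Q ++ [c, b] ++ R) + Q.count a := by
  simp [hbc, hab.symm, hac.symm, hbc.symm]; ring

lemma tripleCount_swap_ends_ab (x y : List β) :
    tripleCount a b c (b :: y ++ [b, a] ++ x ++ [a]) +
        tripleCount a b c (a :: x ++ [a, b] ++ y ++ [b]) + x.count c * (y.count b + 2) =
      tripleCount a b c (a :: y ++ [a, b] ++ x ++ [b]) +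
        tripleCount a b c (b :: x ++ [b, a] ++ y ++ [a]) + y.count c * (x.count b + 2) := by
  simp [hab, hac, hbc, hab.symm]; ring

lemma tripleCount_swap_ends_cb (x y : List β) :
    tripleCount a b c (b :: y ++ [b, c] ++ x ++ [c]) +
        tripleCount a b c (c :: x ++ [c, b] ++ y ++ [b]) + x.count a * (y.count b + 2) =
      tripleCount a b c (c :: y ++ [c, b] ++ x ++ [b]) +
        tripleCount a b c (b :: x ++ [b, c] ++ y ++ [c]) + y.count a * (x.count b + 2) := by
  simp [hbc, hab.symm, hac.symm, hbc.symm]; ring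

end Distinct

end SubwordCounts

section Rotations

variable {β M : Type*} [AddCommMonoid M]

lemma sum_map_cyclicPermutations {w : List β} (hw : w ≠ []) (f : List β → M) :
    (w.cyclicPermutations.map f).sum = ∑ r ∈ range w.length, f (w.rotate r) := by
  have : w.cyclicPermutations = (List.range w.length).map w.rotate :=
    List.ext_getElem (by simp [List.length_cyclicPermutations_of_ne_nil _ hw])
      fun n _ _ => by simp [List.getElem_cyclicPermutations]
  rw [this, List.map_map, Finset.sum_eq_multiset_sum]
  rfl

lemma sum_range_rotate_of_isRotated {u w : List β} (h : u ~r w) (hw : w ≠ [])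
    (f : List β → M) :
    ∑ r ∈ range u.length, f (u.rotate r) = ∑ r ∈ range w.length, f (w.rotate r) := by
  obtain ⟨k, rfl⟩ := h.symm
  rw [← sum_map_cyclicPermutations hw, ← sum_map_cyclicPermutations (by simpa using hw),
    List.cyclicPermutations_rotate]
  exact ((List.rotate_perm _ k).map f).sum_eq

lemma sum_range_rotate_append (f : List β → M) (u v : List β) :
    ∑ r ∈ range (u.length + v.length), f ((u ++ v).rotate r) =
      ∑ r ∈ range u.length, f ((u ++ v).rotate r) +
        ∑ r ∈ range v.length, f ((v ++ u).rotate r) := by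
  rw [Finset.sum_range_add]
  congr 1
  refine Finset.sum_congr rfl fun r _ => ?_
  rw [← List.rotate_rotate, List.rotate_append_length_eq]

lemma rotate_append_of_le_length (u v : List β) {r : ℕ} (hr : r ≤ u.length) :
    (u ++ v).rotate r = u.drop r ++ v ++ u.take r := by
  rw [List.rotate_eq_drop_append_take (by simp; omega), List.drop_append_of_le_length hr,
    List.take_append_of_le_length hr, List.append_assoc]

lemma sum_range_rotate_append_pair (f : List β → M) (x v : List β) (a b : β) :
    ∑ r ∈ range (x.length + 2), f ((x ++ [a, b] ++ v).rotate r) =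
      ∑ r ∈ range (x.length + 1), f (x.drop r ++ [a, b] ++ v ++ x.take r) +
        f (b :: v ++ x ++ [a]) := by
  rw [Finset.sum_range_succ]
  congr 1
  · refine Finset.sum_congr rfl fun r hr => ?_
    have hr : r ≤ x.length := Nat.lt_succ_iff.mp (Finset.mem_range.mp hr)
    rw [List.append_assoc, rotate_append_of_le_length _ _ hr]
    simp
  · rw [rotate_append_of_le_length _ _ (by simp)]
    simp [List.drop_append, List.take_append, List.drop_eq_nil_of_le, List.take_of_length_le]

lemma sum_range_rotate_four_blocks (f : List β → M) (x y : List β) (a b c d : β) :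
    ∑ r ∈ range (x.length + y.length + 4), f ((x ++ [a, b] ++ y ++ [c, d]).rotate r) =
      ∑ r ∈ range (x.length + 1), f (x.drop r ++ [a, b] ++ y ++ [c, d] ++ x.take r) +
        f (b :: y ++ [c, d] ++ x ++ [a]) +
        ∑ r ∈ range (y.length + 1), f (y.drop r ++ [c, d] ++ x ++ [a, b] ++ y.take r) +
        f (d :: x ++ [a, b] ++ y ++ [c]) := by
  have := sum_range_rotate_append f (x ++ [a, b]) (y ++ [c, d])
  simp only [List.length_append, List.length_cons, List.length_nil] at this
  rw [show x.length + y.length + 4 = x.length + 2 + (y.length + 2) by omega,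
    List.append_assoc (x ++ [a, b]), this, sum_range_rotate_append_pair,
    sum_range_rotate_append_pair]
  simp [add_assoc]

/- Cutting `x ab y ba` and `x ba y ab` at the same place inside `x` (resp. `y`) gives two words
that differ by swapping the blocks `ab` and `ba` around `y` (resp. `x`); the two cuts inside a
block are compared together through `hends`. -/
lemma sum_range_rotate_swap (f k : List β → ℕ) (a b : β) (x y : List β) (e e' : ℕ)
    (hmid : ∀ P Q R,
      f (P ++ [a, b] ++ Q ++ [b, a] ++ R) = f (P ++ [b, a] ++ Q ++ [a, b] ++ R) + k Q)
    (hends : f (b :: y ++ [b, a] ++ x ++ [a]) + f (a :: x ++ [a, b] ++ y ++ [b]) + e =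
      f (a :: y ++ [a, b] ++ x ++ [b]) + f (b :: x ++ [b, a] ++ y ++ [a]) + e') :
    ∑ r ∈ range (x.length + y.length + 4), f ((x ++ [a, b] ++ y ++ [b, a]).rotate r) +
        ((y.length + 1) * k x + e) =
      ∑ r ∈ range (x.length + y.length + 4), f ((x ++ [b, a] ++ y ++ [a, b]).rotate r) +
        ((x.length + 1) * k y + e') := by
  simp only [sum_range_rotate_four_blocks, hmid, Finset.sum_add_distrib, Finset.sum_const,
    Finset.card_range, smul_eq_mul]
  omega

lemma sum_range_rotate_swap_eq (f : List β → ℕ) (a b : β) (x y : List β)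
    (hmid : ∀ P Q R, f (P ++ [a, b] ++ Q ++ [b, a] ++ R) = f (P ++ [b, a] ++ Q ++ [a, b] ++ R))
    (hends : f (b :: y ++ [b, a] ++ x ++ [a]) + f (a :: x ++ [a, b] ++ y ++ [b]) =
      f (a :: y ++ [a, b] ++ x ++ [b]) + f (b :: x ++ [b, a] ++ y ++ [a])) :
    ∑ r ∈ range (x.length + y.length + 4), f ((x ++ [a, b] ++ y ++ [b, a]).rotate r) =
      ∑ r ∈ range (x.length + y.length + 4), f ((x ++ [b, a] ++ y ++ [a, b]).rotate r) := by
  simpa using sum_range_rotate_swap f (fun _ => 0) a b x y 0 0 hmid hends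

end Rotations

section ConjClass

variable {β : Type*} [DecidableEq β]

lemma mem_conjClass {u w : List β} : u ∈ conjClass w ↔ u ~r w := by
  simp only [conjClass, Finset.mem_insert, Finset.mem_image, Finset.mem_range]
  constructor
  · rintro (rfl | ⟨r, -, rfl⟩)
    exacts [List.IsRotated.refl u, List.IsRotated.forall w r]
  · intro h
    obtain ⟨k, rfl⟩ := h.symm
    rcases eq_or_ne w [] with rfl | hw
    · simp
    · exact Or.inr ⟨k % w.length, Nat.mod_lt _ (List.length_pos_iff.mpr hw), w.rotate_mod k⟩

lemma sum_conjClass_rotate {M : Type*} [AddCommMonoid M] (w : List β) (r : ℕ) (f : List β → M) :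
    ∑ u ∈ conjClass w, f (u.rotate r) = ∑ u ∈ conjClass w, f u := by
  have hinj : Set.InjOn (fun u : List β => u.rotate r) (conjClass w : Set (List β)) :=
    fun _ _ _ _ h => List.rotate_injective r h
  rw [← Finset.sum_image hinj]
  congr 1
  refine Finset.eq_of_subset_of_card_le ?_ (Finset.card_image_of_injOn hinj).ge
  intro v hv
  obtain ⟨u, hu, rfl⟩ := Finset.mem_image.mp hv
  exact mem_conjClass.mpr ((List.IsRotated.forall u r).trans (mem_conjClass.mp hu))

lemma length_nsmul_sum_conjClass {M : Type*} [AddCommMonoid M] {w : List β} (hw : w ≠ [])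
    (f : List β → M) :
    w.length • ∑ u ∈ conjClass w, f u =
      #(conjClass w) • ∑ r ∈ range w.length, f (w.rotate r) :=
  calc w.length • ∑ u ∈ conjClass w, f u
      = ∑ r ∈ range w.length, ∑ u ∈ conjClass w, f (u.rotate r) := by
        simp [sum_conjClass_rotate]
    _ = ∑ u ∈ conjClass w, ∑ r ∈ range u.length, f (u.rotate r) := by
        rw [Finset.sum_comm]
        refine Finset.sum_congr rfl fun u hu => ?_
        rw [(mem_conjClass.mp hu).perm.length_eq]
    _ = #(conjClass w) • ∑ r ∈ range w.length, f (w.rotate r) := by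
        rw [← Finset.sum_const]
        exact Finset.sum_congr rfl fun u hu =>
          sum_range_rotate_of_isRotated (mem_conjClass.mp hu) hw f

lemma inv_card_smul_sum_conjClass {M : Type*} [AddCommGroup M] [Module ℚ M] {w : List β}
    (hw : w ≠ []) (f : List β → M) :
    (#(conjClass w) : ℚ)⁻¹ • ∑ u ∈ conjClass w, f u =
      (w.length : ℚ)⁻¹ • ∑ r ∈ range w.length, f (w.rotate r) := by
  have hc : (#(conjClass w) : ℚ) ≠ 0 := by
    exact_mod_cast (Finset.card_pos.mpr ⟨w, mem_conjClass.mpr (List.IsRotated.refl w)⟩).ne'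
  have hn : (w.length : ℚ) ≠ 0 := by exact_mod_cast (List.length_pos_iff.mpr hw).ne'
  have h := length_nsmul_sum_conjClass hw f
  rw [← Nat.cast_smul_eq_nsmul ℚ, ← Nat.cast_smul_eq_nsmul ℚ] at h
  rw [inv_smul_eq_iff₀ hc, smul_comm, ← h, inv_smul_smul₀ hn]

end ConjClass

section ParikhMatrix

lemma parikhMatrix_cons {s : ℕ} (a : Fin s) (u : List (Fin s)) :
    parikhMatrix (a :: u) = parikhLetter a * parikhMatrix u := by
  simp [parikhMatrix]

lemma parikhMatrix_fin_three (u : List (Fin 3)) :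
    parikhMatrix u = !![1, (u.count 0 : ℚ), (pairCount 0 1 u : ℚ), (tripleCount 0 1 2 u : ℚ);
      0, 1, (u.count 1 : ℚ), (pairCount 1 2 u : ℚ); 0, 0, 1, (u.count 2 : ℚ); 0, 0, 0, 1] := by
  induction u with
  | nil => ext i j; fin_cases i <;> fin_cases j <;> simp [parikhMatrix]
  | cons a u ih =>
    rw [parikhMatrix_cons, ih]
    ext i j
    fin_cases a <;> fin_cases i <;> fin_cases j <;>
      simp [parikhLetter, Matrix.mul_apply, Fin.sum_univ_four, Matrix.one_apply,
        Matrix.single_apply, add_comm]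

lemma sum_parikhMatrix_fin_three {ι : Type*} (s : Finset ι) (u : ι → List (Fin 3)) :
    ∑ i ∈ s, parikhMatrix (u i) =
      !![(#s : ℚ), ((∑ i ∈ s, (u i).count 0 : ℕ) : ℚ),
          ((∑ i ∈ s, pairCount 0 1 (u i) : ℕ) : ℚ), ((∑ i ∈ s, tripleCount 0 1 2 (u i) : ℕ) : ℚ);
        0, (#s : ℚ), ((∑ i ∈ s, (u i).count 1 : ℕ) : ℚ),
          ((∑ i ∈ s, pairCount 1 2 (u i) : ℕ) : ℚ);
        0, 0, (#s : ℚ), ((∑ i ∈ s, (u i).count 2 : ℕ) : ℚ);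
        0, 0, 0, (#s : ℚ)] := by
  ext i j
  fin_cases i <;> fin_cases j <;> simp [Matrix.sum_apply, parikhMatrix_fin_three]

lemma sum_parikhMatrix_eq_iff {ι : Type*} (s : Finset ι) (u u' : ι → List (Fin 3))
    (hcount : ∀ a, ∑ i ∈ s, (u i).count a = ∑ i ∈ s, (u' i).count a)
    (hpair : ∀ a b, ∑ i ∈ s, pairCount a b (u i) = ∑ i ∈ s, pairCount a b (u' i)) :
    ∑ i ∈ s, parikhMatrix (u i) = ∑ i ∈ s, parikhMatrix (u' i) ↔
      ∑ i ∈ s, tripleCount 0 1 2 (u i) = ∑ i ∈ s, tripleCount 0 1 2 (u' i) := by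
  simp [sum_parikhMatrix_fin_three, hcount, hpair, -Nat.cast_sum]

end ParikhMatrix

lemma sum_range_rotate_tripleCount {α ᾱ : Fin 3} (h : (α = 0 ∧ ᾱ = 2) ∨ (α = 2 ∧ ᾱ = 0))
    (x y : List (Fin 3)) :
    ∑ r ∈ range (x.length + y.length + 4),
        tripleCount 0 1 2 ((x ++ [α, 1] ++ y ++ [1, α]).rotate r) +
          x.count ᾱ * (y.length + y.count 1 + 3) =
      ∑ r ∈ range (x.length + y.length + 4),
        tripleCount 0 1 2 ((x ++ [1, α] ++ y ++ [α, 1]).rotate r) +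
          y.count ᾱ * (x.length + x.count 1 + 3) := by
  rcases h with ⟨rfl, rfl⟩ | ⟨rfl, rfl⟩
  · have := sum_range_rotate_swap _ (List.count 2) 0 1 x y _ _
      (tripleCount_swap_blocks_ab (by decide) (by decide) (by decide))
      (tripleCount_swap_ends_ab (by decide) (by decide) (by decide) x y)
    convert this using 2 <;> ring
  · have := sum_range_rotate_swap _ (List.count 0) 2 1 x y _ _
      (tripleCount_swap_blocks_cb (by decide) (by decide) (by decide))
      (tripleCount_swap_ends_cb (by decide) (by decide) (by decide) x y)
    convert this using 2 <;> ring

/-- Theorem 35: over `{a < b < c} = Fin 3` (with `a = 0`, `b = 1`, `c = 2`), if `α ∈ {a, c}`,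
`w = xαbybα`, `w' = xbαyαb`, and `ᾱ` is the letter other than `α` and `b`, then
`[w] ≡_M [w']` iff `|x|_ᾱ(|y| + |y|_b + 3) = |y|_ᾱ(|x| + |x|_b + 3)`. -/
theorem stmt_18 (α : Fin 3) (hα : α = 0 ∨ α = 2) (x y : List (Fin 3))
    (ᾱ : Fin 3) (hᾱ₁ : ᾱ ≠ α) (hᾱ₂ : ᾱ ≠ 1) :
    circParikh (x ++ [α, 1] ++ y ++ [1, α]) = circParikh (x ++ [1, α] ++ y ++ [α, 1]) ↔
      x.count ᾱ * (y.length + y.count 1 + 3) = y.count ᾱ * (x.length + x.count 1 + 3) := by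
  have hletters : (α = 0 ∧ ᾱ = 2) ∨ (α = 2 ∧ ᾱ = 0) := by omega
  have hlen (a b : Fin 3) : (x ++ [a, b] ++ y ++ [b, a]).length = x.length + y.length + 4 := by
    simp; omega
  rw [circParikh, circParikh, inv_card_smul_sum_conjClass (by simp),
    inv_card_smul_sum_conjClass (by simp), hlen, hlen, smul_right_inj (by positivity),
    sum_parikhMatrix_eq_iff]
  · have := sum_range_rotate_tripleCount hletters x y
    omega
  · intro a
    exact sum_range_rotate_swap_eq _ α 1 x y (fun P Q R => by simp [List.count_cons]; omega)
      (by simp [List.count_cons]; omega)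
  · intro a b
    exact sum_range_rotate_swap_eq _ α 1 x y (pairCount_swap_blocks α 1 a b)
      (pairCount_swap_ends α 1 a b x y)
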